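/- For i = 0 and parameters as above, the set [-1,1] × [0,g_n] × [0,g_p] is positively invariant for the system ε v̇ = -i_ion(v,n,p), ṅ = -n + S_n(v), τ ṗ = -p + S_p(v). -/
import Mathlib

/-- The activation function `(g/2)(tanh((v-a)/b)+1)`. -/
noncomputable def Sact (g a b v : ℝ) : ℝ := g / 2 * (Real.tanh ((v - a) / b) + 1)

/-- The total ionic current. -/
noncomputable def iIon (gl vl : ℝ) (Sm : ℝ → ℝ) (v n p : ℝ) : ℝ :=
  gl * (v - vl) + Sm v * (v - 1) + n * (v + 1) + p * (v - 1)

lemma tanh_lt_one' (x : ℝ) : Real.tanh x < 1 := by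
  rw [Real.tanh_eq_sinh_div_cosh, div_lt_one (Real.cosh_pos x), Real.cosh_eq, Real.sinh_eq]
  have := Real.exp_pos (-x)
  linarith

lemma neg_one_lt_tanh' (x : ℝ) : -1 < Real.tanh x := by
  rw [Real.tanh_eq_sinh_div_cosh, lt_div_iff₀ (Real.cosh_pos x), Real.cosh_eq, Real.sinh_eq]
  have := Real.exp_pos x
  linarith

lemma Sact_pos {g : ℝ} (hg : 0 < g) (a b v : ℝ) : 0 < Sact g a b v := by
  have h := neg_one_lt_tanh' ((v - a) / b)
  unfold Sact; nlinarith

lemma Sact_lt {g : ℝ} (hg : 0 < g) (a b v : ℝ) : Sact g a b v < g := by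
  have h := tanh_lt_one' ((v - a) / b)
  unfold Sact; nlinarith

/-- If `f t ∈ [a,b]` and the derivative pushes inward at the endpoints, then
`f` stays in `[a,b]` for a short time after `t`. -/
lemma stay_in_Icc {f : ℝ → ℝ} {f' a b t : ℝ} (hd : HasDerivAt f f' t) (hab : a < b)
    (hmem : f t ∈ Set.Icc a b) (ha : f t = a → 0 < f') (hb : f t = b → f' < 0) :
    ∀ᶠ s in nhdsWithin t (Set.Ioi t), f s ∈ Set.Icc a b := by
  have hcont : ContinuousAt f t := hd.continuousAt
  have hsub : nhdsWithin t (Set.Ioi t) ≤ nhdsWithin t {t}ᶜ :=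
    nhdsWithin_mono t (fun x hx => ne_of_gt hx)
  rcases eq_or_lt_of_le hmem.1 with h1 | h1
  · -- f t = a
    have hf' : 0 < f' := ha h1.symm
    have hslope := hasDerivAt_iff_tendsto_slope.1 hd
    have hs : ∀ᶠ s in nhdsWithin t {t}ᶜ, 0 < slope f t s :=
      hslope.eventually (eventually_gt_nhds hf')
    have hlow : ∀ᶠ s in nhdsWithin t (Set.Ioi t), a ≤ f s := by
      filter_upwards [hsub hs, self_mem_nhdsWithin] with s hs1 hs2
      have hst : t < s := hs2
      rw [slope_def_field] at hs1
      have hden : 0 < s - t := sub_pos.2 hst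
      have hnum : 0 < f s - f t := by
        rcases div_pos_iff.1 hs1 with ⟨h', _⟩ | ⟨_, h'⟩
        · exact h'
        · linarith
      linarith
    have hftb : f t < b := by rw [← h1]; exact hab
    have hup : ∀ᶠ s in nhds t, f s < b := hcont.eventually_lt continuousAt_const hftb
    filter_upwards [hlow, nhdsWithin_le_nhds hup] with s h1' h2'
    exact ⟨h1', le_of_lt h2'⟩
  rcases eq_or_lt_of_le hmem.2 with h2 | h2
  · -- f t = b
    have hf' : f' < 0 := hb h2
    have hslope := hasDerivAt_iff_tendsto_slope.1 hd
    have hs : ∀ᶠ s in nhdsWithin t {t}ᶜ, slope f t s < 0 :=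
      hslope.eventually (eventually_lt_nhds hf')
    have hup : ∀ᶠ s in nhdsWithin t (Set.Ioi t), f s ≤ b := by
      filter_upwards [hsub hs, self_mem_nhdsWithin] with s hs1 hs2
      have hst : t < s := hs2
      rw [slope_def_field] at hs1
      have hden : 0 < s - t := sub_pos.2 hst
      have hnum : f s - f t < 0 := by
        rcases div_neg_iff.1 hs1 with ⟨_, h'⟩ | ⟨h', _⟩
        · linarith
        · exact h'
      linarith
    have hlow : ∀ᶠ s in nhds t, a < f s := continuousAt_const.eventually_lt hcont h1
    filter_upwards [hup, nhdsWithin_le_nhds hlow] with s hs1 hs2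
    exact ⟨le_of_lt hs2, hs1⟩
  · -- interior
    have hlow : ∀ᶠ s in nhds t, a < f s := continuousAt_const.eventually_lt hcont h1
    have hup : ∀ᶠ s in nhds t, f s < b := hcont.eventually_lt continuousAt_const h2
    filter_upwards [nhdsWithin_le_nhds hlow, nhdsWithin_le_nhds hup] with s hs1 hs2
    exact ⟨le_of_lt hs1, le_of_lt hs2⟩

/-- For `i = 0`, the box `[-1,1] × [0,g_n] × [0,g_p]` is positively invariant for
`ε v̇ = -i_ion(v,n,p)`, `ṅ = -n + S_n(v)`, `τ ṗ = -p + S_p(v)`. -/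
theorem box_positively_invariant
    (ε τ gl vl gm am bm gn an bn gp ap bp : ℝ)
    (hε : 0 < ε) (hτ : 0 < τ) (hgl : 0 < gl) (hvl : -1 < vl ∧ vl < 1)
    (hgm : 0 < gm) (hbm : 0 < bm) (hgn : 0 < gn) (hbn : 0 < bn)
    (hgp : 0 < gp) (hbp : 0 < bp)
    (v n p : ℝ → ℝ)
    (hv : ∀ t : ℝ, 0 ≤ t →
      HasDerivAt v (-(iIon gl vl (Sact gm am bm) (v t) (n t) (p t)) / ε) t)
    (hn : ∀ t : ℝ, 0 ≤ t → HasDerivAt n (-n t + Sact gn an bn (v t)) t)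
    (hp : ∀ t : ℝ, 0 ≤ t → HasDerivAt p ((-p t + Sact gp ap bp (v t)) / τ) t)
    (h0 : v 0 ∈ Set.Icc (-1 : ℝ) 1 ∧ n 0 ∈ Set.Icc 0 gn ∧ p 0 ∈ Set.Icc 0 gp) :
    ∀ t : ℝ, 0 ≤ t →
      v t ∈ Set.Icc (-1 : ℝ) 1 ∧ n t ∈ Set.Icc 0 gn ∧ p t ∈ Set.Icc 0 gp := by
  set P : ℝ → Prop := fun t =>
    v t ∈ Set.Icc (-1 : ℝ) 1 ∧ n t ∈ Set.Icc 0 gn ∧ p t ∈ Set.Icc 0 gp with hP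
  by_contra hcon
  push_neg at hcon
  obtain ⟨t₀, ht₀, hPt₀'⟩ := hcon
  have hPt₀ : ¬ P t₀ := fun hPt => hPt₀' hPt.1 hPt.2.1 hPt.2.2
  set E : Set ℝ := {t | 0 ≤ t ∧ ¬ P t} with hE
  have hEne : E.Nonempty := ⟨t₀, ht₀, hPt₀⟩
  have hEbdd : BddBelow E := ⟨0, fun x hx => hx.1⟩
  set T : ℝ := sInf E with hT
  have hT0 : 0 ≤ T := le_csInf hEne (fun x hx => hx.1)
  have hbefore : ∀ s, 0 ≤ s → s < T → P s := by
    intro s hs0 hsT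
    by_contra hns
    exact absurd (csInf_le hEbdd ⟨hs0, hns⟩) (not_le_of_gt hsT)
  -- P holds at T
  have hPT : P T := by
    rcases eq_or_lt_of_le hT0 with h | h
    · rw [← h]; exact h0
    · -- T > 0 : take limits from the left
      have hne : (nhdsWithin T (Set.Iio T)).NeBot := nhdsLT_neBot T
      have hev : ∀ᶠ s in nhdsWithin T (Set.Iio T), P s := by
        have h1 : ∀ᶠ s in nhds T, 0 < s := eventually_gt_nhds h
        filter_upwards [nhdsWithin_le_nhds h1, self_mem_nhdsWithin] with s hs1 hs2
        exact hbefore s (le_of_lt hs1) hs2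
      have hcv : Filter.Tendsto v (nhdsWithin T (Set.Iio T)) (nhds (v T)) :=
        ((hv T hT0).continuousAt.continuousWithinAt)
      have hcn : Filter.Tendsto n (nhdsWithin T (Set.Iio T)) (nhds (n T)) :=
        ((hn T hT0).continuousAt.continuousWithinAt)
      have hcp : Filter.Tendsto p (nhdsWithin T (Set.Iio T)) (nhds (p T)) :=
        ((hp T hT0).continuousAt.continuousWithinAt)
      refine ⟨⟨?_, ?_⟩, ⟨?_, ?_⟩, ⟨?_, ?_⟩⟩
      · exact le_of_tendsto_of_tendsto tendsto_const_nhds hcv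
          (hev.mono fun s hs => hs.1.1)
      · exact le_of_tendsto hcv (hev.mono fun s hs => hs.1.2)
      · exact le_of_tendsto_of_tendsto tendsto_const_nhds hcn
          (hev.mono fun s hs => hs.2.1.1)
      · exact le_of_tendsto hcn (hev.mono fun s hs => hs.2.1.2)
      · exact le_of_tendsto_of_tendsto tendsto_const_nhds hcp
          (hev.mono fun s hs => hs.2.2.1)
      · exact le_of_tendsto hcp (hev.mono fun s hs => hs.2.2.2)
  obtain ⟨⟨hv1, hv2⟩, ⟨hn1, hn2⟩, ⟨hp1, hp2⟩⟩ := hPT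
  -- v stays in [-1,1] for a short time after T
  have hvstay : ∀ᶠ s in nhdsWithin T (Set.Ioi T), v s ∈ Set.Icc (-1 : ℝ) 1 := by
    refine stay_in_Icc (hv T hT0) (by norm_num) ⟨hv1, hv2⟩ ?_ ?_
    · intro hvT
      have h' : iIon gl vl (Sact gm am bm) (v T) (n T) (p T) < 0 := by
        rw [hvT]; unfold iIon
        nlinarith [hvl.1, hn1, hp1, Sact_pos hgm am bm (-1 : ℝ)]
      exact div_pos (by linarith) hε
    · intro hvT
      have h' : 0 < iIon gl vl (Sact gm am bm) (v T) (n T) (p T) := by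
        rw [hvT]; unfold iIon
        nlinarith [hvl.2, hn1, hp1, Sact_pos hgm am bm (1 : ℝ)]
      exact div_neg_of_neg_of_pos (by linarith) hε
  have hnstay : ∀ᶠ s in nhdsWithin T (Set.Ioi T), n s ∈ Set.Icc 0 gn := by
    refine stay_in_Icc (hn T hT0) hgn ⟨hn1, hn2⟩ ?_ ?_
    · intro hnT
      have := Sact_pos hgn an bn (v T)
      rw [hnT]; linarith
    · intro hnT
      have := Sact_lt hgn an bn (v T)
      rw [hnT]; linarith
  have hpstay : ∀ᶠ s in nhdsWithin T (Set.Ioi T), p s ∈ Set.Icc 0 gp := by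
    refine stay_in_Icc (hp T hT0) hgp ⟨hp1, hp2⟩ ?_ ?_
    · intro hpT
      have h1 := Sact_pos hgp ap bp (v T)
      have h2 : 0 < -p T + Sact gp ap bp (v T) := by rw [hpT]; linarith
      exact div_pos h2 hτ
    · intro hpT
      have h1 := Sact_lt hgp ap bp (v T)
      have h2 : -p T + Sact gp ap bp (v T) < 0 := by rw [hpT]; linarith
      exact div_neg_of_neg_of_pos h2 hτ
  have hall : ∀ᶠ s in nhdsWithin T (Set.Ioi T), P s := by
    filter_upwards [hvstay, hnstay, hpstay] with s h1 h2 h3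
    exact ⟨h1, h2, h3⟩
  obtain ⟨u, hu, huP⟩ := mem_nhdsGT_iff_exists_Ioc_subset.1 hall
  -- u is a lower bound of E
  have : u ≤ T := by
    refine le_csInf hEne (fun e he => ?_)
    by_contra hue
    push_neg at hue
    have heT : T ≤ e := csInf_le hEbdd he
    rcases eq_or_lt_of_le heT with h | h
    · exact he.2 (h ▸ ⟨⟨hv1, hv2⟩, ⟨hn1, hn2⟩, ⟨hp1, hp2⟩⟩)
    · exact he.2 (huP ⟨h, le_of_lt hue⟩)
  exact absurd hu (not_lt_of_ge this)
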